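/- The function φ(t) = ψ(t) - ln t + 1/(2t) + 1/(12t²) is completely monotonic on (0,∞). -/

import Mathlib

noncomputable def psi (t : ℝ) : ℝ := deriv (fun x => Real.log (Real.Gamma x)) t

def CompletelyMonotonicOn (h : ℝ → ℝ) : Prop :=
  ∀ (n : ℕ), ∀ t : ℝ, 0 < t → 0 ≤ (-1 : ℝ) ^ n * iteratedDeriv n h t

open Real Filter Topology Set

lemma summable_aux {m : ℕ} (hm : 2 ≤ m) {c : ℝ} (hc : 0 < c) :
    Summable (fun k : ℕ => 1 / ((k : ℝ) + c) ^ m) := by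
  set M : ℝ := max 1 (1/c) with hM
  have hMpos : (0:ℝ) < M := lt_of_lt_of_le one_pos (le_max_left _ _)
  have base : Summable (fun k : ℕ => 1 / ((k : ℝ) + 1) ^ 2) := by
    have := Real.summable_one_div_nat_pow.mpr (le_refl 2)
    exact_mod_cast (summable_nat_add_iff 1).mpr this
  have base2 : Summable (fun k : ℕ => (M^2 / c^(m-2)) * (1 / ((k : ℝ) + 1) ^ 2)) :=
    base.mul_left _
  apply Summable.of_nonneg_of_le (fun k => by positivity) (fun k => ?_) base2
  have hkc : (0:ℝ) < (k:ℝ) + c := by positivity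
  have h1 : ((k:ℝ) + 1) ≤ ((k:ℝ) + c) * M := by
    rcases le_or_gt 1 c with h | h
    · have : ((k:ℝ) + c) * 1 ≤ ((k:ℝ) + c) * M :=
        mul_le_mul_of_nonneg_left (le_max_left _ _) hkc.le
      linarith
    · have hMc : M = 1/c := max_eq_right (by rw [le_div_iff₀ hc]; linarith)
      rw [hMc, mul_one_div, le_div_iff₀ hc]
      nlinarith [Nat.cast_nonneg (α := ℝ) k]
  have h2 : c ^ (m-2) * ((k:ℝ)+c)^2 ≤ ((k:ℝ)+c) ^ m := by
    have he : ((k:ℝ)+c) ^ m = ((k:ℝ)+c)^(m-2) * ((k:ℝ)+c)^2 := by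
      rw [← pow_add]; congr 1; omega
    rw [he]
    exact mul_le_mul_of_nonneg_right (pow_le_pow_left₀ hc.le (by linarith) _) (by positivity)
  have key : ((k:ℝ)+1)^2 * c^(m-2) ≤ M^2 * ((k:ℝ)+c)^m := by
    calc ((k:ℝ)+1)^2 * c^(m-2) ≤ (((k:ℝ)+c)*M)^2 * c^(m-2) := by
          exact mul_le_mul_of_nonneg_right (pow_le_pow_left₀ (by positivity) h1 2) (by positivity)
      _ = M^2 * (c^(m-2) * ((k:ℝ)+c)^2) := by ring
      _ ≤ M^2 * ((k:ℝ)+c)^m := mul_le_mul_of_nonneg_left h2 (by positivity)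
  rw [div_mul_div_comm, div_le_div_iff₀ (by positivity) (by positivity)]
  nlinarith [key]

noncomputable def S (m : ℕ) (t : ℝ) : ℝ := ∑' k : ℕ, 1 / (t + (k : ℝ)) ^ m

noncomputable def P (t : ℝ) : ℝ :=
  -Real.eulerMascheroniConstant - 1 / t +
    ∑' k : ℕ, (1 / ((k : ℝ) + 1) - 1 / (t + ((k : ℝ) + 1)))

lemma summable_S {m : ℕ} (hm : 2 ≤ m) {t : ℝ} (ht : 0 < t) :
    Summable (fun k : ℕ => 1 / (t + (k : ℝ)) ^ m) := by
  have := summable_aux hm ht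
  simpa [add_comm] using this

lemma summable_Pterm {t : ℝ} (ht : 0 < t) :
    Summable (fun k : ℕ => 1 / ((k : ℝ) + 1) - 1 / (t + ((k : ℝ) + 1))) := by
  have base : Summable (fun k : ℕ => t * (1 / ((k : ℝ) + 1) ^ 2)) :=
    (summable_aux (le_refl 2) one_pos).mul_left t
  apply Summable.of_nonneg_of_le (fun k => ?_) (fun k => ?_) base
  · have h1 : (0:ℝ) < (k:ℝ) + 1 := by positivity
    have h2 : (0:ℝ) < t + ((k:ℝ) + 1) := by positivity
    have := one_div_le_one_div_of_le h1 (by linarith : (k:ℝ) + 1 ≤ t + ((k:ℝ)+1))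
    linarith
  · have h1 : (0:ℝ) < (k:ℝ) + 1 := by positivity
    have h2 : (0:ℝ) < t + ((k:ℝ) + 1) := by positivity
    have he : 1 / ((k : ℝ) + 1) - 1 / (t + ((k : ℝ) + 1))
        = t / (((k:ℝ)+1) * (t + ((k:ℝ)+1))) := by
      field_simp
      ring
    rw [he, mul_one_div, div_le_div_iff₀ (by positivity) (by positivity)]
    nlinarith [mul_nonneg ht.le (mul_nonneg h1.le ht.le)]

lemma hasDerivAt_inv_pow (m : ℕ) {y c : ℝ} (h : 0 < y + c) :
    HasDerivAt (fun x => 1 / (x + c) ^ m) (-(m : ℝ) / (y + c) ^ (m + 1)) y := by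
  rcases Nat.eq_zero_or_pos m with hm | hm
  · subst hm; simpa using hasDerivAt_const y (1:ℝ)
  have h1 : HasDerivAt (fun x : ℝ => (x + c) ^ m) ((m:ℝ) * (y+c) ^ (m-1)) y := by
    have h1 : HasDerivAt (fun x : ℝ => (x + c) ^ m) _ y := ((hasDerivAt_id y).add_const c).pow m
    simpa using h1
  have h2 : HasDerivAt (fun x => ((x + c) ^ m)⁻¹) _ y := h1.inv (by positivity)
  simp only [one_div]
  convert h2 using 1
  rw [div_eq_div_iff (by positivity) (by positivity), neg_mul, neg_mul, neg_inj,
    ← pow_mul, mul_assoc, ← pow_add]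
  have he : m - 1 + (m + 1) = m * 2 := by omega
  rw [he]

lemma hasDerivAt_S {m : ℕ} (hm : 2 ≤ m) {t : ℝ} (ht : 0 < t) :
    HasDerivAt (S m) (-(m : ℝ) * S (m + 1) t) t := by
  have hu : Summable (fun k : ℕ => (m:ℝ) * (1 / ((k:ℝ) + t/2) ^ (m+1))) :=
    (summable_aux (by omega) (by positivity)).mul_left _
  have hg : ∀ (k : ℕ) (y : ℝ), y ∈ Ioi (t/2) →
      HasDerivAt (fun x => 1 / (x + (k:ℝ)) ^ m) (-(m:ℝ) / (y + (k:ℝ)) ^ (m+1)) y := by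
    intro k y hy
    have hy' : t/2 < y := hy
    have hk : (0:ℝ) ≤ (k:ℝ) := Nat.cast_nonneg k
    exact hasDerivAt_inv_pow m (by linarith)
  have hg' : ∀ (k : ℕ) (y : ℝ), y ∈ Ioi (t/2) →
      ‖-(m:ℝ) / (y + (k:ℝ)) ^ (m+1)‖ ≤ (m:ℝ) * (1 / ((k:ℝ) + t/2) ^ (m+1)) := by
    intro k y hy
    have hy' : t/2 < y := hy
    have hk : (0:ℝ) ≤ (k:ℝ) := Nat.cast_nonneg k
    have h1 : (0:ℝ) < (k:ℝ) + t/2 := by positivity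
    have h2 : (0:ℝ) < y + (k:ℝ) := by linarith
    rw [Real.norm_eq_abs, abs_div, abs_neg, abs_of_nonneg (by positivity : (0:ℝ) ≤ (m:ℝ)),
      abs_of_nonneg (by positivity : (0:ℝ) ≤ (y + (k:ℝ)) ^ (m+1)), mul_one_div]
    apply div_le_div_of_nonneg_left (by positivity) (by positivity)
    apply pow_le_pow_left₀ h1.le (by linarith)
  have key := hasDerivAt_tsum_of_isPreconnected hu isOpen_Ioi (isPreconnected_Ioi (a := t/2))
    hg hg' (mem_Ioi.mpr (by linarith : t/2 < t)) (summable_S hm ht)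
    (mem_Ioi.mpr (by linarith : t/2 < t))
  have he : (∑' k : ℕ, -(m:ℝ) / (t + (k : ℝ)) ^ (m+1)) = -(m:ℝ) * S (m+1) t := by
    rw [S, ← tsum_mul_left]
    congr 1; funext k; rw [mul_one_div, neg_div]
  rw [← he]
  exact key

lemma hasDerivAt_P {t : ℝ} (ht : 0 < t) : HasDerivAt P (S 2 t) t := by
  have hu : Summable (fun k : ℕ => 1 / (((k:ℝ)+1) + t/2) ^ 2) := by
    have := summable_aux (le_refl 2) (show (0:ℝ) < 1 + t/2 by positivity)
    apply this.congr
    intro k; congr 2; ring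
  have hg : ∀ (k : ℕ) (y : ℝ), y ∈ Ioi (t/2) →
      HasDerivAt (fun x => 1 / ((k : ℝ) + 1) - 1 / (x + ((k : ℝ) + 1)))
        ((1:ℝ) / (y + ((k : ℝ)+1)) ^ 2) y := by
    intro k y hy
    have hy' : t/2 < y := hy
    have hk : (0:ℝ) ≤ (k:ℝ) := Nat.cast_nonneg k
    have h := (hasDerivAt_inv_pow 1 (c := (k:ℝ)+1) (y := y) (by linarith)).const_sub
      (1 / ((k : ℝ) + 1))
    simp only [pow_one] at h
    have h : HasDerivAt (fun x => 1 / ((k : ℝ) + 1) - 1 / (x + ((k : ℝ) + 1))) _ y := h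
    convert h using 1
    push_cast
    rw [neg_div, neg_neg, one_div]
  have hg' : ∀ (k : ℕ) (y : ℝ), y ∈ Ioi (t/2) →
      ‖(1:ℝ) / (y + ((k : ℝ)+1)) ^ 2‖ ≤ 1 / (((k:ℝ)+1) + t/2) ^ 2 := by
    intro k y hy
    have hy' : t/2 < y := hy
    have hk : (0:ℝ) ≤ (k:ℝ) := Nat.cast_nonneg k
    have h1 : (0:ℝ) < ((k:ℝ)+1) + t/2 := by positivity
    have h2 : (0:ℝ) < y + ((k:ℝ)+1) := by linarith
    rw [Real.norm_eq_abs, abs_of_nonneg (by positivity)]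
    apply div_le_div_of_nonneg_left one_pos.le (by positivity)
    apply pow_le_pow_left₀ h1.le (by linarith)
  have key := hasDerivAt_tsum_of_isPreconnected hu isOpen_Ioi (isPreconnected_Ioi (a := t/2))
    hg hg' (mem_Ioi.mpr (by linarith : t/2 < t)) (summable_Pterm ht)
    (mem_Ioi.mpr (by linarith : t/2 < t))
  have hinv : HasDerivAt (fun z : ℝ => -Real.eulerMascheroniConstant - 1/z) ((1:ℝ)/t^2) t := by
    have h := ((hasDerivAt_inv ht.ne').const_sub (-Real.eulerMascheroniConstant))
    simpa [one_div] using h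
  have hsum := hinv.add key
  have hS : S 2 t = (1:ℝ)/t^2 + ∑' k : ℕ, (1:ℝ) / (t + ((k : ℝ)+1)) ^ 2 := by
    rw [S, Summable.tsum_eq_zero_add (summable_S (le_refl 2) ht)]
    congr 1
    · norm_num
    · exact tsum_congr fun k => by push_cast; ring_nf
  rw [hS]
  exact hsum

lemma tendsto_one_div_nat (c : ℝ) :
    Tendsto (fun n : ℕ => 1 / ((n : ℝ) + c)) atTop (𝓝 0) := by
  have h := (tendsto_atTop_add_const_right atTop c
    (tendsto_natCast_atTop_atTop (R := ℝ))).inv_tendsto_atTop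
  simpa [one_div, Pi.inv_def] using h

lemma tsum_telescope {a : ℕ → ℝ} (h0 : Tendsto a atTop (𝓝 0))
    (hs : Summable fun k => a k - a (k + 1)) : (∑' k : ℕ, (a k - a (k + 1))) = a 0 := by
  have h1 := hs.hasSum.tendsto_sum_nat
  have h2 : (fun n => ∑ i ∈ Finset.range n, (a i - a (i + 1))) = fun n => a 0 - a n := by
    funext n; exact Finset.sum_range_sub' a n
  rw [h2] at h1
  have h3 : Tendsto (fun n : ℕ => a 0 - a n) atTop (𝓝 (a 0 - 0)) := tendsto_const_nhds.sub h0
  rw [sub_zero] at h3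
  exact tendsto_nhds_unique h1 h3

lemma P_rec {x : ℝ} (hx : 0 < x) : P (x + 1) = P x + 1 / x := by
  have hx1 : (0:ℝ) < x + 1 := by linarith
  have key : (∑' k : ℕ, (1 / ((k : ℝ) + 1) - 1 / ((x + 1) + ((k : ℝ) + 1))))
      - (∑' k : ℕ, (1 / ((k : ℝ) + 1) - 1 / (x + ((k : ℝ) + 1)))) = 1 / (x + 1) := by
    rw [← Summable.tsum_sub (summable_Pterm hx1) (summable_Pterm hx)]
    have he : (fun k : ℕ => (1 / ((k : ℝ) + 1) - 1 / ((x + 1) + ((k : ℝ) + 1)))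
        - (1 / ((k : ℝ) + 1) - 1 / (x + ((k : ℝ) + 1))))
        = fun k : ℕ => (fun j : ℕ => 1 / (x + ((j : ℝ) + 1))) k
          - (fun j : ℕ => 1 / (x + ((j : ℝ) + 1))) (k + 1) := by
      funext k; push_cast; ring_nf
    rw [he, tsum_telescope]
    · norm_num
    · have := tendsto_one_div_nat (x + 1)
      apply this.congr
      intro n; congr 1; ring
    · rw [← he]
      exact (summable_Pterm hx1).sub (summable_Pterm hx)
  unfold P
  have h1 : x ≠ 0 := hx.ne'
  have h2 : x + 1 ≠ 0 := hx1.ne'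
  field_simp at key ⊢
  nlinarith [key]

lemma P_one : P 1 = -Real.eulerMascheroniConstant := by
  unfold P
  have key : (∑' k : ℕ, (1 / ((k : ℝ) + 1) - 1 / (1 + ((k : ℝ) + 1)))) = 1 := by
    have he : (fun k : ℕ => (1 / ((k : ℝ) + 1) - 1 / (1 + ((k : ℝ) + 1))))
        = fun k : ℕ => (fun j : ℕ => 1 / ((j : ℝ) + 1)) k
          - (fun j : ℕ => 1 / ((j : ℝ) + 1)) (k + 1) := by
      funext k; push_cast; ring_nf
    rw [he, tsum_telescope]
    · norm_num
    · exact tendsto_one_div_nat 1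
    · rw [← he]; exact summable_Pterm one_pos
  rw [key]; ring

lemma P_mono {s t : ℝ} (hs : 0 < s) (hst : s ≤ t) : P s ≤ P t := by
  have ht : 0 < t := lt_of_lt_of_le hs hst
  unfold P
  have h1 : 1 / t ≤ 1 / s := one_div_le_one_div_of_le hs hst
  have h2 : (∑' k : ℕ, (1 / ((k : ℝ) + 1) - 1 / (s + ((k : ℝ) + 1))))
      ≤ ∑' k : ℕ, (1 / ((k : ℝ) + 1) - 1 / (t + ((k : ℝ) + 1))) := by
    apply Summable.tsum_le_tsum _ (summable_Pterm hs) (summable_Pterm ht)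
    intro k
    have hk : (0:ℝ) < s + ((k:ℝ) + 1) := by positivity
    have := one_div_le_one_div_of_le hk (by linarith : s + ((k:ℝ)+1) ≤ t + ((k:ℝ)+1))
    linarith
  linarith

lemma gamma_ne_neg_nat {x : ℝ} (hx : 0 < x) : ∀ m : ℕ, x ≠ -m := fun m =>
  ne_of_gt (lt_of_le_of_lt (neg_nonpos.mpr m.cast_nonneg) hx)

lemma diff_logGamma {x : ℝ} (hx : 0 < x) :
    DifferentiableAt ℝ (fun x => Real.log (Real.Gamma x)) x :=
  (Real.differentiableAt_Gamma (gamma_ne_neg_nat hx)).log (Real.Gamma_pos_of_pos hx).ne'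

lemma psi_rec {x : ℝ} (hx : 0 < x) : psi (x + 1) = psi x + 1 / x := by
  show deriv (fun x => Real.log (Real.Gamma x)) (x+1)
    = deriv (fun x => Real.log (Real.Gamma x)) x + 1 / x
  rw [← deriv_comp_add_const, one_div, ← Real.deriv_log,
    ← deriv_add (diff_logGamma hx) (Real.differentiableAt_log hx.ne')]
  apply Filter.EventuallyEq.deriv_eq
  filter_upwards [eventually_gt_nhds hx] with y hy
  rw [Real.Gamma_add_one hy.ne', Real.log_mul hy.ne' (Real.Gamma_pos_of_pos hy).ne', add_comm]
  rfl

lemma psi_one : psi 1 = -Real.eulerMascheroniConstant := by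
  have h : HasDerivAt (fun x => Real.log (Real.Gamma x))
      (-Real.eulerMascheroniConstant / Real.Gamma 1) 1 :=
    Real.hasDerivAt_Gamma_one.log (by rw [Real.Gamma_one]; norm_num)
  rw [Real.Gamma_one, div_one] at h
  exact h.deriv

lemma psi_mono {s t : ℝ} (hs : 0 < s) (hst : s ≤ t) : psi s ≤ psi t := by
  rcases eq_or_lt_of_le hst with h | h
  · rw [h]
  have ht : 0 < t := lt_of_lt_of_le hs hst
  have hc : ConvexOn ℝ (Ioi 0) (fun x => Real.log (Real.Gamma x)) := by
    have := Real.convexOn_log_Gamma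
    simpa [Function.comp_def] using this
  calc psi s ≤ slope (fun x => Real.log (Real.Gamma x)) s t :=
        hc.deriv_le_slope (mem_Ioi.mpr hs) (mem_Ioi.mpr ht) h (diff_logGamma hs)
    _ ≤ psi t := hc.slope_le_deriv (mem_Ioi.mpr hs) (mem_Ioi.mpr ht) h (diff_logGamma ht)

lemma D_per {x : ℝ} (hx : 0 < x) : psi (x + 1) - P (x + 1) = psi x - P x := by
  rw [psi_rec hx, P_rec hx]; ring

lemma D_shift {x : ℝ} (hx : 0 < x) (n : ℕ) : psi (x + n) - P (x + n) = psi x - P x := by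
  induction n with
  | zero => norm_num
  | succ n ih =>
    have h1 : x + ((n:ℝ) + 1) = (x + n) + 1 := by ring
    push_cast
    rw [h1, D_per (by positivity), ih]

lemma D_nat (n : ℕ) : psi ((n : ℝ) + 1) - P ((n : ℝ) + 1) = 0 := by
  have := D_shift one_pos n
  rw [psi_one, P_one] at this
  rw [add_comm]
  simpa using this

lemma psi_eq_P {t : ℝ} (ht : 0 < t) : psi t = P t := by
  set m : ℕ := Nat.floor t with hm
  have hmt : (m : ℝ) ≤ t := Nat.floor_le ht.le
  have htm : t < (m : ℝ) + 1 := Nat.lt_floor_add_one t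
  have key : ∀ n : ℕ, |psi t - P t| ≤ 1 / ((n : ℝ) + ((m : ℝ) + 1)) := by
    intro n
    set N : ℕ := m + n + 1 with hN
    have hNr : (N : ℝ) = (m : ℝ) + n + 1 := by rw [hN]; push_cast; ring
    have hNpos : (0 : ℝ) < N := by rw [hNr]; positivity
    have hx : t + ((n : ℝ) + 1) > 0 := by positivity
    have hD : psi (t + ((n:ℝ) + 1)) - P (t + ((n:ℝ) + 1)) = psi t - P t := by
      have := D_shift ht (n + 1)
      push_cast at this
      exact this
    have hNle : (N : ℝ) ≤ t + ((n:ℝ) + 1) := by rw [hNr]; linarith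
    have hleN1 : t + ((n:ℝ) + 1) ≤ (N : ℝ) + 1 := by rw [hNr]; linarith
    have hpsiN : psi ((N:ℝ) + 1) = psi N + 1 / N := psi_rec hNpos
    have hPN : P ((N:ℝ) + 1) = P N + 1 / N := P_rec hNpos
    have hDN : psi (N:ℝ) - P (N:ℝ) = 0 := by
      have := D_nat (m + n)
      have hc : ((m + n : ℕ) : ℝ) + 1 = (N : ℝ) := by rw [hNr]; push_cast; ring
      rwa [hc] at this
    have h1 : psi (t + ((n:ℝ)+1)) ≤ psi ((N:ℝ) + 1) := psi_mono hx hleN1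
    have h2 : psi (N:ℝ) ≤ psi (t + ((n:ℝ)+1)) := psi_mono hNpos hNle
    have h3 : P (t + ((n:ℝ)+1)) ≤ P ((N:ℝ) + 1) := P_mono hx hleN1
    have h4 : P (N:ℝ) ≤ P (t + ((n:ℝ)+1)) := P_mono hNpos hNle
    have hinv : 1/(N:ℝ) = 1/((n:ℝ)+((m:ℝ)+1)) := by rw [hNr]; ring_nf
    rw [← hD]
    rw [abs_le]
    constructor
    · rw [hPN] at h3; linarith
    · rw [hpsiN] at h1; linarith
  have htend := tendsto_one_div_nat ((m : ℝ) + 1)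
  have h0 : |psi t - P t| ≤ 0 := ge_of_tendsto' htend key
  have := abs_nonpos_iff.mp h0
  linarith

noncomputable def phi : ℝ → ℝ := fun t => psi t - Real.log t + 1 / (2 * t) + 1 / (12 * t ^ 2)

noncomputable def Phi (n : ℕ) (t : ℝ) : ℝ :=
  (-1) ^ n * ((Nat.factorial (n - 1) : ℝ) * (1 / t ^ n)
    + (1 / 2) * ((Nat.factorial n : ℝ) * (1 / t ^ (n + 1)))
    + (1 / 12) * ((Nat.factorial (n + 1) : ℝ) * (1 / t ^ (n + 2)))
    - (Nat.factorial n : ℝ) * S (n + 1) t)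

lemma hasDerivAt_one_div_pow (m : ℕ) {t : ℝ} (ht : 0 < t) :
    HasDerivAt (fun x : ℝ => 1 / x ^ m) (-(m : ℝ) / t ^ (m + 1)) t := by
  have h := hasDerivAt_inv_pow m (y := t) (c := 0) (by simpa using ht)
  simpa using h

lemma psi_eventually_eq {t : ℝ} (ht : 0 < t) : psi =ᶠ[𝓝 t] P := by
  filter_upwards [eventually_gt_nhds ht] with x hx
  exact psi_eq_P hx

lemma hasDerivAt_phi {t : ℝ} (ht : 0 < t) : HasDerivAt phi (Phi 1 t) t := by
  have hpsi : HasDerivAt psi (S 2 t) t :=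
    (hasDerivAt_P ht).congr_of_eventuallyEq (psi_eventually_eq ht)
  have hlog : HasDerivAt Real.log t⁻¹ t := Real.hasDerivAt_log ht.ne'
  have h2 : HasDerivAt (fun x : ℝ => 1 / (2 * x)) ((1/2) * (-(1 : ℝ) / t ^ 2)) t := by
    have h := (hasDerivAt_one_div_pow 1 ht).const_mul (1/2 : ℝ)
    have he : (fun x : ℝ => (1/2 : ℝ) * (1 / x ^ 1)) = (fun x : ℝ => 1 / (2 * x)) := by
      funext x; rw [pow_one]; simp [one_div, mul_inv, mul_comm]
    rw [he] at h
    have h : HasDerivAt (fun x : ℝ => 1 / (2 * x)) _ t := h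
    convert h using 1 <;> push_cast <;> ring_nf
  have h3 : HasDerivAt (fun x : ℝ => 1 / (12 * x ^ 2)) ((1/12) * (-(2 : ℝ) / t ^ 3)) t := by
    have h := (hasDerivAt_one_div_pow 2 ht).const_mul (1/12 : ℝ)
    have he : (fun x : ℝ => (1/12 : ℝ) * (1 / x ^ 2)) = (fun x : ℝ => 1 / (12 * x ^ 2)) := by
      funext x; simp [one_div, mul_inv, mul_comm]
    rw [he] at h
    have h : HasDerivAt (fun x : ℝ => 1 / (12 * x ^ 2)) _ t := h
    convert h using 1 <;> push_cast <;> ring_nf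
  have H := ((hpsi.sub hlog).add h2).add h3
  have : HasDerivAt phi (S 2 t - t⁻¹ + (1/2) * (-(1:ℝ)/t^2) + (1/12) * (-(2:ℝ)/t^3)) t := H
  convert this using 1
  rw [Phi]
  simp only [Nat.factorial]
  push_cast
  field_simp
  ring

lemma factorial_mul_cast (n : ℕ) :
    ((Nat.factorial n : ℝ)) * ((n : ℝ) + 1) = (Nat.factorial (n + 1) : ℝ) := by
  rw [Nat.factorial_succ]; push_cast; ring

lemma hasDerivAt_Phi {n : ℕ} (hn : 1 ≤ n) {t : ℝ} (ht : 0 < t) :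
    HasDerivAt (Phi n) (Phi (n + 1) t) t := by
  have hA := (hasDerivAt_one_div_pow n ht).const_mul (Nat.factorial (n - 1) : ℝ)
  have hB := ((hasDerivAt_one_div_pow (n + 1) ht).const_mul (Nat.factorial n : ℝ)).const_mul
    (1/2 : ℝ)
  have hC := ((hasDerivAt_one_div_pow (n + 2) ht).const_mul
    (Nat.factorial (n + 1) : ℝ)).const_mul (1/12 : ℝ)
  have hD := (hasDerivAt_S (by omega : 2 ≤ n + 1) ht).const_mul (Nat.factorial n : ℝ)
  have H := ((((hA.add hB).add hC).sub hD).const_mul ((-1 : ℝ) ^ n))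
  have he : (fun x => ((-1:ℝ)) ^ n * ((Nat.factorial (n - 1) : ℝ) * (1 / x ^ n)
      + (1 / 2) * ((Nat.factorial n : ℝ) * (1 / x ^ (n + 1)))
      + (1 / 12) * ((Nat.factorial (n + 1) : ℝ) * (1 / x ^ (n + 2)))
      - (Nat.factorial n : ℝ) * S (n + 1) x)) = Phi n := rfl
  have H : HasDerivAt (Phi n) _ t := H
  convert H using 1
  have e1 : ((Nat.factorial (n-1) : ℝ)) * (n : ℝ) = (Nat.factorial n : ℝ) := by
    have := Nat.mul_factorial_pred (show n ≠ 0 by omega)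
    exact_mod_cast (by rw [mul_comm]; exact_mod_cast congrArg (Nat.cast (R := ℝ)) this)
  have e2 := factorial_mul_cast n
  have e3 := factorial_mul_cast (n + 1)
  rw [Phi]
  have hsucc : n - 1 + 1 = n := by omega
  have hpow : ((-1:ℝ)) ^ (n+1) = -((-1:ℝ)) ^ n := by rw [pow_succ]; ring
  rw [hpow]
  have h1 : (n + 1 - 1) = n := by omega
  rw [h1]
  push_cast [← e1, ← e2, ← e3]
  ring

lemma iteratedDeriv_phi (n : ℕ) : ∀ {t : ℝ}, 0 < t → iteratedDeriv (n + 1) phi t = Phi (n + 1) t := by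
  induction n with
  | zero =>
    intro t ht
    rw [iteratedDeriv_one]
    exact (hasDerivAt_phi ht).deriv
  | succ n ih =>
    intro t ht
    rw [iteratedDeriv_succ]
    have hev : iteratedDeriv (n + 1) phi =ᶠ[𝓝 t] Phi (n + 1) := by
      filter_upwards [eventually_gt_nhds ht] with x hx
      exact ih hx
    rw [hev.deriv_eq]
    exact (hasDerivAt_Phi (by omega) ht).deriv

noncomputable def E (n : ℕ) (t : ℝ) : ℝ :=
  ((n : ℝ))⁻¹ * (1 / t ^ n) + (1 / 2) * (1 / t ^ (n + 1)) + (((n : ℝ) + 1) / 12) * (1 / t ^ (n + 2))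

lemma mono_aux {F F' : ℝ → ℝ} (hd : ∀ u ∈ Icc (0:ℝ) 1, HasDerivAt F (F' u) u)
    (hpos : ∀ u ∈ Icc (0:ℝ) 1, 0 ≤ F' u) {u : ℝ} (hu : u ∈ Icc (0:ℝ) 1) : F 0 ≤ F u := by
  have hmono : MonotoneOn F (Icc 0 1) := by
    apply monotoneOn_of_deriv_nonneg (convex_Icc 0 1)
      (fun x hx => (hd x hx).continuousAt.continuousWithinAt)
      (fun x hx => ((hd x (by rw [interior_Icc] at hx; exact Ioo_subset_Icc_self hx)
        ).differentiableAt).differentiableWithinAt)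
    intro x hx
    rw [interior_Icc] at hx
    rw [(hd x (Ioo_subset_Icc_self hx)).deriv]
    exact hpos x (Ioo_subset_Icc_self hx)
  exact hmono (by constructor <;> norm_num) hu hu.1

lemma key_step {n : ℕ} (hn : 1 ≤ n) {t : ℝ} (ht : 0 < t) :
    1 / t ^ (n + 1) + E n (t + 1) ≤ E n t := by
  have hn0 : ((n : ℝ)) ≠ 0 := by positivity
  have hnn : ((n : ℝ))⁻¹ * (n : ℝ) = 1 := inv_mul_cancel₀ hn0
  set H0 : ℝ → ℝ := fun u => (1/t^n - 1/(u+t)^n)*((n:ℝ))⁻¹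
    - u*(1/t^(n+1) + 1/(u+t)^(n+1))/2
    + u^2*((n:ℝ)+1)*(1/t^(n+2) - 1/(u+t)^(n+2))/12 with hH0
  set H1 : ℝ → ℝ := fun u => 1/(u+t)^(n+1) - (1/t^(n+1) + 1/(u+t)^(n+1))/2
    + u*((n:ℝ)+1)*(1/(u+t)^(n+2))/2
    + u*((n:ℝ)+1)*(1/t^(n+2) - 1/(u+t)^(n+2))/6
    + u^2*((n:ℝ)+1)*((n:ℝ)+2)*(1/(u+t)^(n+3))/12 with hH1
  set H2 : ℝ → ℝ := fun u => ((n:ℝ)+1)*(1/t^(n+2) - 1/(u+t)^(n+2))/6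
    - u*((n:ℝ)+1)*((n:ℝ)+2)*(1/(u+t)^(n+3))/6
    - u^2*((n:ℝ)+1)*((n:ℝ)+2)*((n:ℝ)+3)*(1/(u+t)^(n+4))/12 with hH2
  set H3 : ℝ → ℝ := fun u =>
    u^2*((n:ℝ)+1)*((n:ℝ)+2)*((n:ℝ)+3)*((n:ℝ)+4)*(1/(u+t)^(n+5))/12 with hH3
  have hd0 : ∀ u ∈ Icc (0:ℝ) 1, HasDerivAt H0 (H1 u) u := by
    intro u hu
    have hut : 0 < u + t := by have := hu.1; linarith
    have fn := hasDerivAt_inv_pow n hut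
    have fn1 := hasDerivAt_inv_pow (n+1) hut
    have fn2 := hasDerivAt_inv_pow (n+2) hut
    have A := ((hasDerivAt_const u (1/t^n)).sub fn).mul_const ((n:ℝ))⁻¹
    have B := ((hasDerivAt_id u).mul ((hasDerivAt_const u (1/t^(n+1))).add fn1)).div_const 2
    have C := (((hasDerivAt_pow 2 u).mul_const ((n:ℝ)+1)).mul
      ((hasDerivAt_const u (1/t^(n+2))).sub fn2)).div_const 12
    have H := (A.sub B).add C
    have H : HasDerivAt H0 _ u := H
    convert H using 1
    rw [hH1]
    push_cast
    simp only [id_eq, Pi.add_apply, Pi.sub_apply, Pi.mul_apply]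
    linear_combination (-(1/(u+t)^(n+1))) * hnn
  have hd1 : ∀ u ∈ Icc (0:ℝ) 1, HasDerivAt H1 (H2 u) u := by
    intro u hu
    have hut : 0 < u + t := by have := hu.1; linarith
    have fn1 := hasDerivAt_inv_pow (n+1) hut
    have fn2 := hasDerivAt_inv_pow (n+2) hut
    have fn3 := hasDerivAt_inv_pow (n+3) hut
    have T1 := fn1
    have T2 := ((hasDerivAt_const u (1/t^(n+1))).add fn1).div_const 2
    have T3 := (((hasDerivAt_id u).mul_const ((n:ℝ)+1)).mul fn2).div_const 2
    have T4 := (((hasDerivAt_id u).mul_const ((n:ℝ)+1)).mul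
      ((hasDerivAt_const u (1/t^(n+2))).sub fn2)).div_const 6
    have T5 := ((((hasDerivAt_pow 2 u).mul_const ((n:ℝ)+1)).mul_const ((n:ℝ)+2)).mul
      fn3).div_const 12
    have H := ((((T1.sub T2).add T3).add T4).add T5)
    have H : HasDerivAt H1 _ u := H
    convert H using 1
    rw [hH2]
    push_cast
    simp only [id_eq, Pi.add_apply, Pi.sub_apply, Pi.mul_apply]
    ring
  have hd2 : ∀ u ∈ Icc (0:ℝ) 1, HasDerivAt H2 (H3 u) u := by
    intro u hu
    have hut : 0 < u + t := by have := hu.1; linarith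
    have fn2 := hasDerivAt_inv_pow (n+2) hut
    have fn3 := hasDerivAt_inv_pow (n+3) hut
    have fn4 := hasDerivAt_inv_pow (n+4) hut
    have U1 := (((hasDerivAt_const u (1/t^(n+2))).sub fn2).const_mul ((n:ℝ)+1)).div_const 6
    have U2 := ((((hasDerivAt_id u).mul_const ((n:ℝ)+1)).mul_const ((n:ℝ)+2)).mul
      fn3).div_const 6
    have U3 := (((((hasDerivAt_pow 2 u).mul_const ((n:ℝ)+1)).mul_const ((n:ℝ)+2)).mul_const
      ((n:ℝ)+3)).mul fn4).div_const 12
    have H := ((U1.sub U2).sub U3)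
    have H : HasDerivAt H2 _ u := H
    convert H using 1
    rw [hH3]
    push_cast
    simp only [id_eq]
    ring
  have h3pos : ∀ u ∈ Icc (0:ℝ) 1, 0 ≤ H3 u := by
    intro u hu
    have hut : 0 < u + t := by have := hu.1; linarith
    rw [hH3]
    have h5 : (0:ℝ) ≤ 1/(u+t)^(n+5) := le_of_lt (one_div_pos.mpr (pow_pos hut _))
    have c1 : (0:ℝ) ≤ (n:ℝ)+1 := by positivity
    have c2 : (0:ℝ) ≤ (n:ℝ)+2 := by positivity
    have c3 : (0:ℝ) ≤ (n:ℝ)+3 := by positivity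
    have c4 : (0:ℝ) ≤ (n:ℝ)+4 := by positivity
    apply div_nonneg _ (by norm_num)
    exact mul_nonneg (mul_nonneg (mul_nonneg (mul_nonneg (mul_nonneg (sq_nonneg u) c1) c2) c3) c4) h5
  have h2zero : H2 0 = 0 := by rw [hH2]; norm_num
  have h2pos : ∀ u ∈ Icc (0:ℝ) 1, 0 ≤ H2 u := by
    intro u hu
    rw [← h2zero]
    exact mono_aux hd2 h3pos hu
  have h1zero : H1 0 = 0 := by rw [hH1]; norm_num
  have h1pos : ∀ u ∈ Icc (0:ℝ) 1, 0 ≤ H1 u := by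
    intro u hu
    rw [← h1zero]
    exact mono_aux hd1 h2pos hu
  have h0zero : H0 0 = 0 := by rw [hH0]; norm_num
  have h0fin : 0 ≤ H0 1 := by
    rw [← h0zero]
    exact mono_aux hd0 h1pos (by constructor <;> norm_num)
  rw [hH0] at h0fin
  simp only [] at h0fin
  rw [E, E]
  have ht1 : t + 1 = 1 + t := by ring
  rw [ht1]
  nlinarith [h0fin]

lemma E_nonneg {n : ℕ} {t : ℝ} (ht : 0 < t) : 0 ≤ E n t := by
  rw [E]
  have h1 : (0:ℝ) ≤ 1/t^n := le_of_lt (one_div_pos.mpr (pow_pos ht _))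
  have h2 : (0:ℝ) ≤ 1/t^(n+1) := le_of_lt (one_div_pos.mpr (pow_pos ht _))
  have h3 : (0:ℝ) ≤ 1/t^(n+2) := le_of_lt (one_div_pos.mpr (pow_pos ht _))
  have c1 : (0:ℝ) ≤ ((n:ℝ))⁻¹ := by positivity
  have c2 : (0:ℝ) ≤ ((n:ℝ)+1)/12 := by positivity
  nlinarith

lemma sum_le_E {n : ℕ} (hn : 1 ≤ n) {t : ℝ} (ht : 0 < t) (K : ℕ) :
    ∑ k ∈ Finset.range K, 1 / (t + (k:ℝ)) ^ (n+1) ≤ E n t - E n (t + K) := by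
  induction K with
  | zero => simp
  | succ K ih =>
    rw [Finset.sum_range_succ]
    have hK : (0:ℝ) < t + K := by positivity
    have hks := key_step hn hK
    have hcast : t + ((K:ℝ)+1) = (t + (K:ℝ)) + 1 := by ring
    push_cast
    rw [hcast]
    linarith

lemma S_le_E {n : ℕ} (hn : 1 ≤ n) {t : ℝ} (ht : 0 < t) : S (n+1) t ≤ E n t := by
  rw [S]
  apply Summable.tsum_le_of_sum_range_le (summable_S (by omega) ht)
  intro K
  have h1 := sum_le_E hn ht K
  have h2 : (0:ℝ) ≤ E n (t + K) := E_nonneg (by positivity)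
  linarith

lemma Phi_nonneg {n : ℕ} (hn : 1 ≤ n) {t : ℝ} (ht : 0 < t) : 0 ≤ (-1:ℝ)^n * Phi n t := by
  have hn0 : ((n : ℝ)) ≠ 0 := by positivity
  have e1 : ((Nat.factorial (n-1) : ℝ)) * (n : ℝ) = (Nat.factorial n : ℝ) := by
    have := Nat.mul_factorial_pred (show n ≠ 0 by omega)
    rw [mul_comm]
    exact_mod_cast congrArg (Nat.cast (R := ℝ)) this
  have e2 : ((Nat.factorial n : ℝ)) * ((n : ℝ) + 1) = (Nat.factorial (n + 1) : ℝ) := by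
    rw [Nat.factorial_succ]; push_cast; ring
  have e3 : ((Nat.factorial (n+1) : ℝ)) = ((Nat.factorial (n-1) : ℝ)) * (n:ℝ) * ((n:ℝ)+1) := by
    rw [e1, e2]
  have hE : (Nat.factorial n : ℝ) * E n t
      = (Nat.factorial (n-1):ℝ)*(1/t^n) + (1/2)*((Nat.factorial n:ℝ)*(1/t^(n+1)))
        + (1/12)*((Nat.factorial (n+1):ℝ)*(1/t^(n+2))) := by
    rw [E, e3, ← e1]
    field_simp
  have hS := S_le_E hn ht
  have hfac : (0:ℝ) ≤ (Nat.factorial n : ℝ) := by positivity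
  have hmul := mul_le_mul_of_nonneg_left hS hfac
  rw [hE] at hmul
  have hsq : (-1:ℝ)^n * (-1:ℝ)^n = 1 := by
    rw [← pow_add]
    exact Even.neg_one_pow ⟨n, rfl⟩
  rw [Phi, ← mul_assoc, hsq, one_mul]
  linarith

lemma convexOn_logGamma : ConvexOn ℝ (Ioi 0) (fun x => Real.log (Real.Gamma x)) := by
  have := Real.convexOn_log_Gamma
  simpa [Function.comp_def] using this

lemma slope_logGamma {x : ℝ} (hx : 0 < x) :
    slope (fun x => Real.log (Real.Gamma x)) x (x + 1) = Real.log x := by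
  rw [slope_def_field]
  rw [show x + 1 - x = 1 by ring, div_one, Real.Gamma_add_one hx.ne',
    Real.log_mul hx.ne' (Real.Gamma_pos_of_pos hx).ne']
  ring

lemma psi_le_log {x : ℝ} (hx : 0 < x) : psi x ≤ Real.log x := by
  have h := convexOn_logGamma.deriv_le_slope (mem_Ioi.mpr hx)
    (mem_Ioi.mpr (by linarith : (0:ℝ) < x + 1)) (lt_add_one x) (diff_logGamma hx)
  rwa [slope_logGamma hx] at h

lemma log_le_psi_succ {x : ℝ} (hx : 0 < x) : Real.log x ≤ psi (x + 1) := by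
  have h := convexOn_logGamma.slope_le_deriv (mem_Ioi.mpr hx)
    (mem_Ioi.mpr (by linarith : (0:ℝ) < x + 1)) (lt_add_one x) (diff_logGamma (by linarith))
  rwa [slope_logGamma hx] at h

lemma phi_tendsto {t : ℝ} (ht : 0 < t) :
    Tendsto (fun n : ℕ => phi (t + n)) atTop (𝓝 0) := by
  have hlow : Tendsto (fun n : ℕ => -(1 / ((n : ℝ) + (t - 1)))) atTop (𝓝 0) := by
    have := (tendsto_one_div_nat (t - 1)).neg
    simpa using this
  have hup : Tendsto (fun n : ℕ => 1 / ((n : ℝ) + t)) atTop (𝓝 0) := tendsto_one_div_nat t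
  apply tendsto_of_tendsto_of_tendsto_of_le_of_le' hlow hup
  · -- lower bound, for n ≥ 1
    filter_upwards [eventually_ge_atTop 1] with n hn
    have hn1 : (1:ℝ) ≤ (n:ℝ) := by exact_mod_cast hn
    have hx : (0:ℝ) < t + n - 1 := by linarith
    have hxn : (0:ℝ) < t + n := by linarith
    have h1 : Real.log (t + n - 1) ≤ psi (t + n) := by
      have := log_le_psi_succ hx
      rw [show t + n - 1 + 1 = t + n by ring] at this
      exact this
    have h2 : Real.log (t + n) - Real.log (t + n - 1) ≤ 1 / (t + n - 1) := by
      have hz : (0:ℝ) < (t + n) / (t + n - 1) := by positivity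
      have := Real.log_le_sub_one_of_pos hz
      rw [Real.log_div hxn.ne' hx.ne'] at this
      have he : (t + n) / (t + n - 1) - 1 = 1 / (t + n - 1) := by field_simp; ring
      linarith [he ▸ this]
    have h3 : (0:ℝ) ≤ 1 / (2 * (t + n)) := by positivity
    have h4 : (0:ℝ) ≤ 1 / (12 * (t + n) ^ 2) := by positivity
    have he : (n:ℝ) + (t - 1) = t + n - 1 := by ring
    rw [he]
    show -(1 / (t + n - 1)) ≤ phi (t + n)
    rw [phi]
    linarith
  · -- upper bound, for n ≥ 1
    filter_upwards [eventually_ge_atTop 1] with n hn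
    have hn1 : (1:ℝ) ≤ (n:ℝ) := by exact_mod_cast hn
    have hxn : (0:ℝ) < t + n := by linarith
    have hxn1 : (1:ℝ) ≤ t + n := by linarith
    have h1 : psi (t + n) ≤ Real.log (t + n) := psi_le_log hxn
    have h2 : 1 / (12 * (t + n) ^ 2) ≤ 1 / (12 * (t + n)) := by
      apply div_le_div_of_nonneg_left one_pos.le (by positivity)
      nlinarith
    have h3 : 1 / (2 * (t + n)) + 1 / (12 * (t + n)) ≤ 1 / (t + n) := by
      rw [div_add_div _ _ (by positivity) (by positivity), div_le_div_iff₀ (by positivity) (by positivity)]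
      ring_nf
      nlinarith
    show phi (t + n) ≤ 1 / ((n:ℝ) + t)
    rw [phi, show (n:ℝ) + t = t + n by ring]
    linarith

lemma phi_nonneg {t : ℝ} (ht : 0 < t) : 0 ≤ phi t := by
  have hant : AntitoneOn phi (Ici t) := by
    apply antitoneOn_of_deriv_nonpos (convex_Ici t)
    · intro x hx
      exact (hasDerivAt_phi (lt_of_lt_of_le ht hx)).continuousAt.continuousWithinAt
    · intro x hx
      rw [interior_Ici] at hx
      exact (hasDerivAt_phi (by linarith [mem_Ioi.mp hx])).differentiableAt.differentiableWithinAt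
    · intro x hx
      rw [interior_Ici] at hx
      have hx0 : 0 < x := by linarith [mem_Ioi.mp hx]
      rw [(hasDerivAt_phi hx0).deriv]
      have := Phi_nonneg (le_refl 1) hx0
      simpa using this
  have hle : ∀ n : ℕ, phi (t + n) ≤ phi t := by
    intro n
    have h1 : t ≤ t + n := by
      have : (0:ℝ) ≤ (n:ℝ) := Nat.cast_nonneg n
      linarith
    exact hant (mem_Ici.mpr (le_refl t)) (mem_Ici.mpr h1) h1
  exact le_of_tendsto' (phi_tendsto ht) hle

theorem stmt1 :
    CompletelyMonotonicOn
      (fun t => psi t - Real.log t + 1 / (2 * t) + 1 / (12 * t ^ 2)) := by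
  intro n t ht
  match n with
  | 0 =>
    simp only [pow_zero, one_mul, iteratedDeriv_zero]
    exact phi_nonneg ht
  | (m + 1) =>
    show 0 ≤ (-1:ℝ) ^ (m+1) * iteratedDeriv (m+1) phi t
    rw [iteratedDeriv_phi m ht]
    exact Phi_nonneg (by omega) ht
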